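/- Let Π ⊂ ℝ₊^{N×N} be a compact convex set, D ∈ ℝ^{N×N}, and H(M) = −Σ_{p,q} M_{pq}(log M_{pq} − 1) with 0 log 0 = 0. For ε > 0 let M_ε be the unique minimizer of M ↦ ⟨M,D⟩_F − εH(M) over Π. Then as ε → 0: (i) the regularized optimal value converges to inf_{M∈Π} ⟨M,D⟩_F, and (ii) M_ε converges to the unique maximizer of H over the set Π₀* of minimizers of ⟨·,D⟩_F on Π. -/

import Mathlib

/-!
Write `F = ⟨·, D⟩_F` and `H = ent`. Testing the optimality of `M_ε` against `M*` and using
`F(M*) ≤ F(M_ε)` gives `H(M*) ≤ H(M_ε)` and `F(M*) ≤ F(M_ε) ≤ F(M*) + ε (H(M_ε) - H(M*))`.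
As `H` is bounded on the compact set `Π`, both `F(M_ε)` and the regularized value tend to `F(M*)`.
So every cluster point `L` of `M_ε` minimizes `F` on `Π` and has `H(M*) ≤ H(L)`. The minimizers
of the linear `F` form a convex set on which `H` is strictly concave, so `L = M*`; compactness
of `Π` turns this uniqueness of cluster points into convergence.
-/

open Finset

/-- Frobenius inner product of two `N × N` real matrices. -/
noncomputable def frob (N : ℕ) (M D : Matrix (Fin N) (Fin N) ℝ) : ℝ :=
  ∑ p, ∑ q, M p q * D p q

/-- Entropy of a nonnegative matrix, with the convention `0 log 0 = 0`
(`Real.log 0 = 0`). -/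
noncomputable def ent (N : ℕ) (M : Matrix (Fin N) (Fin N) ℝ) : ℝ :=
  -∑ p, ∑ q, M p q * (Real.log (M p q) - 1)

open Filter Topology Set

lemma StrictConvexOn.sum_pi {𝕜 E β ι : Type*} [Fintype ι] [Semiring 𝕜] [PartialOrder 𝕜]
    [AddCommMonoid E] [Module 𝕜 E] [AddCommMonoid β] [PartialOrder β]
    [IsOrderedCancelAddMonoid β] [Module 𝕜 β] {s : Set E} {φ : E → β}
    (hφ : StrictConvexOn 𝕜 s φ) :
    StrictConvexOn 𝕜 (univ.pi fun _ : ι => s) (fun x => ∑ i, φ (x i)) := by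
  refine ⟨convex_pi fun _ _ => hφ.1, fun x hx y hy hxy a b ha hb hab => ?_⟩
  obtain ⟨i, hi⟩ := Function.ne_iff.1 hxy
  calc ∑ j, φ ((a • x + b • y) j) < ∑ j, (a • φ (x j) + b • φ (y j)) :=
        Finset.sum_lt_sum
          (fun j _ => hφ.convexOn.2 (hx j trivial) (hy j trivial) ha.le hb.le hab)
          ⟨i, Finset.mem_univ _, hφ.2 (hx i trivial) (hy i trivial) hi ha hb hab⟩
    _ = a • ∑ j, φ (x j) + b • ∑ j, φ (y j) := by
        simp only [Finset.sum_add_distrib, Finset.smul_sum]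

lemma strictConvexOn_mul_log_sub_one :
    StrictConvexOn ℝ (Ici 0) (fun x : ℝ => x * (Real.log x - 1)) :=
  (Real.strictConvexOn_mul_log.sub_concaveOn (concaveOn_id (convex_Ici 0))).congr
    fun x _ => by simp only [Pi.sub_apply, id]; ring

lemma strictConcaveOn_ent (N : ℕ) :
    StrictConcaveOn ℝ (univ.pi fun _ : Fin N => univ.pi fun _ : Fin N => Ici 0) (ent N) :=
  strictConvexOn_mul_log_sub_one.sum_pi.sum_pi.neg

lemma continuous_ent (N : ℕ) : Continuous (ent N) := by
  have hφ : Continuous fun x : ℝ => x * (Real.log x - 1) :=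
    (Real.continuous_mul_log.sub continuous_id).congr fun x => by simp only [Pi.sub_apply, id]; ring
  exact (continuous_finsetSum _ fun p _ => continuous_finsetSum _ fun q _ =>
    hφ.comp (by fun_prop)).neg

lemma continuous_frob (N : ℕ) (D : Matrix (Fin N) (Fin N) ℝ) :
    Continuous fun M => frob N M D := by
  unfold frob
  fun_prop

lemma convexOn_frob (N : ℕ) (D : Matrix (Fin N) (Fin N) ℝ) {K : Set (Matrix (Fin N) (Fin N) ℝ)}
    (hK : Convex ℝ K) : ConvexOn ℝ K fun M => frob N M D :=
  LinearMap.convexOn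
    { toFun := fun M => frob N M D
      map_add' := fun A B => by
        simp only [frob, Matrix.add_apply, add_mul, Finset.sum_add_distrib]
      map_smul' := fun c A => by
        simp only [frob, Matrix.smul_apply, smul_eq_mul, mul_assoc, Finset.mul_sum,
          RingHom.id_apply] } hK

lemma StrictConcaveOn.eq_of_isMaxOn_of_isMinOn {𝕜 E : Type*} [Field 𝕜] [LinearOrder 𝕜]
    [IsStrictOrderedRing 𝕜] [AddCommGroup E] [Module 𝕜 E] {P K : Set E} {f g : E → 𝕜}
    {x₀ y : E} (hg : StrictConcaveOn 𝕜 P g) (hKP : K ⊆ P) (hf : ConvexOn 𝕜 K f)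
    (hx₀ : x₀ ∈ K) (hmin : IsMinOn f K x₀) (hmax : ∀ z ∈ K, IsMinOn f K z → g z ≤ g x₀)
    (hy : y ∈ K) (hfy : f y ≤ f x₀) (hgy : g x₀ ≤ g y) : y = x₀ := by
  have hargmin : ∀ z ∈ {z ∈ K | f z ≤ f x₀}, IsMinOn f K z :=
    fun z hz => isMinOn_iff.2 fun w hw => hz.2.trans (hmin hw)
  have hmax₀ : IsMaxOn g {z ∈ K | f z ≤ f x₀} x₀ := fun z hz => hmax z hz.1 (hargmin z hz)
  exact (hg.subset (fun z hz => hKP hz.1) (hf.convex_le _)).eq_of_isMaxOn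
    (fun z hz => (hmax₀ hz).trans hgy) hmax₀ ⟨hy, hfy⟩ ⟨hx₀, le_rfl⟩

lemma Filter.Tendsto.zero_mul_comp_of_isCompact {ι X : Type*} [TopologicalSpace X] {l : Filter ι}
    {u : ι → ℝ} {y : ι → X} {K : Set X} {g : X → ℝ} (hu : Tendsto u l (𝓝 0))
    (hK : IsCompact K) (hg : ContinuousOn g K) (hy : ∀ᶠ i in l, y i ∈ K) :
    Tendsto (fun i => u i * g (y i)) l (𝓝 0) := by
  obtain ⟨C, hC⟩ := hK.exists_bound_of_continuousOn hg
  exact hu.zero_mul_isBoundedUnder_le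
    (isBoundedUnder_of_eventually_le (a := C) (hy.mono fun i hi => hC _ hi))

def IsRegularizedMinimizer {X : Type*} (K : Set X) (f g : X → ℝ) (x : ℝ → X) : Prop :=
  ∀ ε, 0 < ε → x ε ∈ K ∧ IsMinOn (fun y => f y - ε * g y) K (x ε)

namespace IsRegularizedMinimizer

variable {X : Type*} {K : Set X} {f g : X → ℝ} {x : ℝ → X} {x₀ : X}

lemma eventually_mem (hx : IsRegularizedMinimizer K f g x) : ∀ᶠ ε in 𝓝[>] 0, x ε ∈ K :=
  eventually_nhdsWithin_of_forall fun ε hε => (hx ε hε).1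

lemma objective_le (hx : IsRegularizedMinimizer K f g x) (hmin : IsMinOn f K x₀) {ε : ℝ}
    (hε : 0 < ε) : f x₀ ≤ f (x ε) :=
  hmin (hx ε hε).1

lemma value_le (hx : IsRegularizedMinimizer K f g x) (hx₀ : x₀ ∈ K) {ε : ℝ} (hε : 0 < ε) :
    f (x ε) - ε * g (x ε) ≤ f x₀ - ε * g x₀ :=
  (hx ε hε).2 hx₀

lemma regularizer_le (hx : IsRegularizedMinimizer K f g x) (hx₀ : x₀ ∈ K)
    (hmin : IsMinOn f K x₀) {ε : ℝ} (hε : 0 < ε) : g x₀ ≤ g (x ε) :=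
  le_of_mul_le_mul_left
    (by linarith [hx.value_le hx₀ hε, hx.objective_le hmin hε]) hε

variable [TopologicalSpace X]

lemma tendsto_objective (hx : IsRegularizedMinimizer K f g x) (hK : IsCompact K)
    (hg : ContinuousOn g K) (hx₀ : x₀ ∈ K) (hmin : IsMinOn f K x₀) :
    Tendsto (fun ε => f (x ε)) (𝓝[>] 0) (𝓝 (f x₀)) := by
  have hid : Tendsto (fun ε : ℝ => ε) (𝓝[>] 0) (𝓝 0) := nhdsWithin_le_nhds
  have hupper : Tendsto (fun ε => f x₀ - ε * g x₀ + ε * g (x ε)) (𝓝[>] 0) (𝓝 (f x₀)) := by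
    simpa using (tendsto_const_nhds.sub (hid.zero_mul_comp_of_isCompact hK hg
      (Eventually.of_forall fun _ => hx₀))).add
      (hid.zero_mul_comp_of_isCompact hK hg hx.eventually_mem)
  refine tendsto_of_tendsto_of_tendsto_of_le_of_le' tendsto_const_nhds hupper ?_ ?_
  · filter_upwards [self_mem_nhdsWithin] with ε hε using hx.objective_le hmin hε
  · filter_upwards [self_mem_nhdsWithin] with ε hε
    linarith [hx.value_le hx₀ hε]

lemma tendsto_value (hx : IsRegularizedMinimizer K f g x) (hK : IsCompact K)
    (hg : ContinuousOn g K) (hx₀ : x₀ ∈ K) (hmin : IsMinOn f K x₀) :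
    Tendsto (fun ε => f (x ε) - ε * g (x ε)) (𝓝[>] 0) (𝓝 (f x₀)) := by
  have hid : Tendsto (fun ε : ℝ => ε) (𝓝[>] 0) (𝓝 0) := nhdsWithin_le_nhds
  simpa using (hx.tendsto_objective hK hg hx₀ hmin).sub
    (hid.zero_mul_comp_of_isCompact hK hg hx.eventually_mem)

lemma mapClusterPt [T2Space X] (hx : IsRegularizedMinimizer K f g x) (hK : IsCompact K)
    (hf : Continuous f) (hg : Continuous g) (hx₀ : x₀ ∈ K) (hmin : IsMinOn f K x₀) {L : X}
    (hL : MapClusterPt L (𝓝[>] 0) x) : L ∈ K ∧ f L ≤ f x₀ ∧ g x₀ ≤ g L := by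
  refine ⟨hK.isClosed.mem_of_mapClusterPt hL hx.eventually_mem, le_of_eq ?_,
    (isClosed_le continuous_const hg).mem_of_mapClusterPt hL ?_⟩
  · -- `f L` is a cluster point of `f ∘ x`, which converges to `f x₀`
    exact eq_of_nhds_neBot ((hL.continuousAt_comp hf.continuousAt).clusterPt.mono
      (hx.tendsto_objective hK hg.continuousOn hx₀ hmin)).neBot
  · exact eventually_nhdsWithin_of_forall fun ε hε => hx.regularizer_le hx₀ hmin hε

lemma tendsto [T2Space X] (hx : IsRegularizedMinimizer K f g x) (hK : IsCompact K)
    (hf : Continuous f) (hg : Continuous g) (hx₀ : x₀ ∈ K) (hmin : IsMinOn f K x₀)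
    (huniq : ∀ y ∈ K, f y ≤ f x₀ → g x₀ ≤ g y → y = x₀) :
    Tendsto x (𝓝[>] 0) (𝓝 x₀) :=
  hK.tendsto_nhds_of_unique_mapClusterPt hx.eventually_mem fun _ _ hL =>
    let ⟨hLK, hfL, hgL⟩ := hx.mapClusterPt hK hf hg hx₀ hmin hL
    huniq _ hLK hfL hgL

end IsRegularizedMinimizer

theorem entropic_regularization_convergence_general
    (N : ℕ) (Pi' : Set (Matrix (Fin N) (Fin N) ℝ)) (D : Matrix (Fin N) (Fin N) ℝ)
    (hcomp : IsCompact Pi') (hconv : Convex ℝ Pi')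
    (hpos : ∀ M ∈ Pi', ∀ p q, 0 ≤ M p q)
    (Me : ℝ → Matrix (Fin N) (Fin N) ℝ)
    (hMe : ∀ ε : ℝ, 0 < ε → Me ε ∈ Pi' ∧
      ∀ M ∈ Pi', frob N (Me ε) D - ε * ent N (Me ε) ≤ frob N M D - ε * ent N M)
    (Mstar : Matrix (Fin N) (Fin N) ℝ)
    (hMstar₁ : Mstar ∈ Pi' ∧ ∀ M' ∈ Pi', frob N Mstar D ≤ frob N M' D)
    (hMstar₂ : ∀ M ∈ Pi', (∀ M' ∈ Pi', frob N M D ≤ frob N M' D) →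
      ent N M ≤ ent N Mstar) :
    Filter.Tendsto (fun ε => frob N (Me ε) D - ε * ent N (Me ε))
        (nhdsWithin 0 (Set.Ioi 0)) (nhds (sInf {c : ℝ | ∃ M ∈ Pi', c = frob N M D})) ∧
    Filter.Tendsto Me (nhdsWithin 0 (Set.Ioi 0)) (nhds Mstar) := by
  obtain ⟨hMstar, hMstar_min⟩ := hMstar₁
  have hreg : IsRegularizedMinimizer Pi' (frob N · D) (ent N) Me :=
    fun ε hε => ⟨(hMe ε hε).1, isMinOn_iff.2 (hMe ε hε).2⟩
  have hmin : IsMinOn (frob N · D) Pi' Mstar := isMinOn_iff.2 hMstar_min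
  have hsInf : sInf {c : ℝ | ∃ M ∈ Pi', c = frob N M D} = frob N Mstar D :=
    IsLeast.csInf_eq ⟨⟨Mstar, hMstar, rfl⟩, fun _ ⟨M, hM, hc⟩ => hc ▸ hMstar_min M hM⟩
  refine ⟨hsInf ▸ hreg.tendsto_value hcomp (continuous_ent N).continuousOn hMstar hmin,
    hreg.tendsto hcomp (continuous_frob N D) (continuous_ent N) hMstar hmin
      fun L hL hfL hgL => ?_⟩
  exact (strictConcaveOn_ent N).eq_of_isMaxOn_of_isMinOn
    (fun M hM p _ q _ => hpos M hM p q) (convexOn_frob N D hconv) hMstar hmin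
    (fun M hM hMmin => hMstar₂ M hM (isMinOn_iff.1 hMmin)) hL hfL hgL

/-- convergence of the entropic regularization as `ε → 0⁺`: the regularized
optimal values converge to the unregularized optimal value, and the regularized minimizers
`M_ε` converge to the maximizer of the entropy over the set of minimizers `Π₀*`. -/
theorem entropic_regularization_convergence
    (N : ℕ) (Pi' : Set (Matrix (Fin N) (Fin N) ℝ)) (D : Matrix (Fin N) (Fin N) ℝ)
    (hne : Pi'.Nonempty) (hcomp : IsCompact Pi') (hconv : Convex ℝ Pi')
    (hpos : ∀ M ∈ Pi', ∀ p q, 0 ≤ M p q)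
    (Me : ℝ → Matrix (Fin N) (Fin N) ℝ)
    (hMe : ∀ ε : ℝ, 0 < ε → Me ε ∈ Pi' ∧
      ∀ M ∈ Pi', frob N (Me ε) D - ε * ent N (Me ε) ≤ frob N M D - ε * ent N M)
    (Mstar : Matrix (Fin N) (Fin N) ℝ)
    (hMstar₁ : Mstar ∈ Pi' ∧ ∀ M' ∈ Pi', frob N Mstar D ≤ frob N M' D)
    (hMstar₂ : ∀ M ∈ Pi', (∀ M' ∈ Pi', frob N M D ≤ frob N M' D) →
      ent N M ≤ ent N Mstar) :
    Filter.Tendsto (fun ε => frob N (Me ε) D - ε * ent N (Me ε))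
        (nhdsWithin 0 (Set.Ioi 0)) (nhds (sInf {c : ℝ | ∃ M ∈ Pi', c = frob N M D})) ∧
    Filter.Tendsto Me (nhdsWithin 0 (Set.Ioi 0)) (nhds Mstar) :=
  entropic_regularization_convergence_general N Pi' D hcomp hconv hpos Me hMe Mstar hMstar₁ hMstar₂
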